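/- Let D ∈ ℝ^{n×n} be symmetric, E ∈ ℝ^{n×n}, C = D·E, let H : ℝⁿ → ℝ and J : ℝⁿ → ℝⁿ satisfy ⟨w₁ − w₂, J(w₁) − J(w₂)⟩ = 0 for all w₁, w₂ ∈ ℝⁿ. Let wᵏ, w̃ᵏ, w̃^{k+1} ∈ ℝⁿ and set w^{k+1} = wᵏ − E(wᵏ − w̃ᵏ). Assume (i) for all w ∈ ℝⁿ: H(w) − H(w̃ᵏ) + ⟨w − w̃ᵏ, J(w̃ᵏ) − C(wᵏ − w̃ᵏ)⟩ ≥ 0, and (ii) for all w ∈ ℝⁿ: H(w) − H(w̃^{k+1}) + ⟨w − w̃^{k+1}, J(w̃^{k+1}) − C(w^{k+1} − w̃^{k+1})⟩ ≥ 0. Then, with a = wᵏ − w̃ᵏ and b = w^{k+1} − w̃^{k+1}, one has aᵀEᵀDE(a − b) ≥ (1/2)·(a − b)ᵀ(Cᵀ + C)(a − b). -/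

import Mathlib

open Matrix

/-!
Testing the variational inequality of `w̃ᵏ` at `w̃ᵏ⁺¹` and that of `w̃ᵏ⁺¹` at `w̃ᵏ`, adding, and
cancelling `J` by skew-orthogonality gives `(w̃ᵏ⁺¹ − w̃ᵏ)ᵀ C (a − b) ≤ 0`. The corrector update
rewrites `w̃ᵏ⁺¹ − w̃ᵏ` as `(a − b) − E a`, so `(a − b)ᵀ C (a − b) ≤ (E a)ᵀ C (a − b)`; the left side
is the symmetrised quadratic form and the right side is `aᵀ EᵀDE (a − b)` since `C = DE`.
-/

section

variable {ι R : Type*} [Fintype ι] [CommRing R]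

theorem dotProduct_add_transpose_mulVec_self (C : Matrix ι ι R) (x : ι → R) :
    x ⬝ᵥ ((Cᵀ + C) *ᵥ x) = 2 * (x ⬝ᵥ (C *ᵥ x)) := by
  rw [add_mulVec, dotProduct_add, dotProduct_mulVec x Cᵀ, vecMul_transpose, dotProduct_comm,
    two_mul]

theorem dotProduct_transpose_mul_mul_mulVec (D E : Matrix ι ι R) (x y : ι → R) :
    x ⬝ᵥ ((Eᵀ * D * E) *ᵥ y) = (E *ᵥ x) ⬝ᵥ ((D * E) *ᵥ y) := by
  rw [dotProduct_mulVec, dotProduct_mulVec, Matrix.mul_assoc, ← vecMul_vecMul, vecMul_transpose]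

theorem dotProduct_sub_nonpos_of_variational [LinearOrder R] [IsStrictOrderedRing R]
    {H : (ι → R) → R} {J : (ι → R) → ι → R}
    (hskew : ∀ w₁ w₂, (w₁ - w₂) ⬝ᵥ (J w₁ - J w₂) = 0) {u v p q : ι → R}
    (hu : ∀ w, 0 ≤ H w - H u + (w - u) ⬝ᵥ (J u - p))
    (hv : ∀ w, 0 ≤ H w - H v + (w - v) ⬝ᵥ (J v - q)) :
    (v - u) ⬝ᵥ (p - q) ≤ 0 := by
  have hu' := hu v
  have hv' := hv u
  have hJ : (v - u) ⬝ᵥ (J v - J u) = 0 := hskew v u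
  have hswap : (u - v) ⬝ᵥ (J v - q) = -((v - u) ⬝ᵥ (J v - q)) := by
    rw [← neg_sub v u, neg_dotProduct]
  simp only [dotProduct_sub] at hu' hv' hJ hswap ⊢
  linarith

end

theorem neADMM_nonergodic_key_inequality_general {n : ℕ}
    (D E : Matrix (Fin n) (Fin n) ℝ)
    (C : Matrix (Fin n) (Fin n) ℝ) (hC : C = D * E)
    (H : (Fin n → ℝ) → ℝ) (J : (Fin n → ℝ) → (Fin n → ℝ))
    (hskew : ∀ w₁ w₂ : Fin n → ℝ, (w₁ - w₂) ⬝ᵥ (J w₁ - J w₂) = 0)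
    (wk wtk wtk1 : Fin n → ℝ) (wk1 : Fin n → ℝ) (hwk1 : wk1 = wk - E *ᵥ (wk - wtk))
    (h1 : ∀ w : Fin n → ℝ, 0 ≤ H w - H wtk + (w - wtk) ⬝ᵥ (J wtk - C *ᵥ (wk - wtk)))
    (h2 : ∀ w : Fin n → ℝ,
      0 ≤ H w - H wtk1 + (w - wtk1) ⬝ᵥ (J wtk1 - C *ᵥ (wk1 - wtk1))) :
    (1 / 2) * (((wk - wtk) - (wk1 - wtk1)) ⬝ᵥ
        ((Cᵀ + C) *ᵥ ((wk - wtk) - (wk1 - wtk1)))) ≤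
      (wk - wtk) ⬝ᵥ ((Eᵀ * D * E) *ᵥ ((wk - wtk) - (wk1 - wtk1))) := by
  set a := wk - wtk
  set b := wk1 - wtk1
  have hstep : wtk1 - wtk = (a - b) - E *ᵥ a := by
    simp only [a, b, hwk1]
    abel
  have hpred := dotProduct_sub_nonpos_of_variational hskew h1 h2
  rw [← mulVec_sub, hstep, sub_dotProduct] at hpred
  rw [dotProduct_add_transpose_mulVec_self, dotProduct_transpose_mul_mul_mulVec, ← hC]
  linarith

/-- Key inequality of the nonergodic rate analysis of neADMM: from the variational
characterizations of two consecutive predictor iterates `w̃ᵏ, w̃^{k+1}` and the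
skew-orthogonality of `J`, with `a = wᵏ − w̃ᵏ`, `b = w^{k+1} − w̃^{k+1}` and
`w^{k+1} = wᵏ − E(wᵏ − w̃ᵏ)`, one has `aᵀEᵀDE(a − b) ≥ ½(a − b)ᵀ(Cᵀ + C)(a − b)`. -/
theorem neADMM_nonergodic_key_inequality {n : ℕ}
    (D E : Matrix (Fin n) (Fin n) ℝ) (hD : D.IsSymm)
    (C : Matrix (Fin n) (Fin n) ℝ) (hC : C = D * E)
    (H : (Fin n → ℝ) → ℝ) (J : (Fin n → ℝ) → (Fin n → ℝ))
    (hskew : ∀ w₁ w₂ : Fin n → ℝ, (w₁ - w₂) ⬝ᵥ (J w₁ - J w₂) = 0)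
    (wk wtk wtk1 : Fin n → ℝ) (wk1 : Fin n → ℝ) (hwk1 : wk1 = wk - E *ᵥ (wk - wtk))
    (h1 : ∀ w : Fin n → ℝ, 0 ≤ H w - H wtk + (w - wtk) ⬝ᵥ (J wtk - C *ᵥ (wk - wtk)))
    (h2 : ∀ w : Fin n → ℝ,
      0 ≤ H w - H wtk1 + (w - wtk1) ⬝ᵥ (J wtk1 - C *ᵥ (wk1 - wtk1))) :
    (1 / 2) * (((wk - wtk) - (wk1 - wtk1)) ⬝ᵥ
        ((Cᵀ + C) *ᵥ ((wk - wtk) - (wk1 - wtk1)))) ≤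
      (wk - wtk) ⬝ᵥ ((Eᵀ * D * E) *ᵥ ((wk - wtk) - (wk1 - wtk1))) :=
  neADMM_nonergodic_key_inequality_general D E C hC H J hskew wk wtk wtk1 wk1 hwk1 h1 h2
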